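/- arXiv:2012.14413 — 8 statements merged into one kernel-verified Lean document; each statement's English description precedes it below -/
import Mathlib

section
/- Let Γ be a group and let m be a positive natural number. If every finitely generated subgroup Λ of Γ has the property that the center Z(Λ) has finite index at most m in Λ, then the center Z(Γ) has finite index at most m in Γ. -/
/-- **Control by finitely generated subgroups.**
If every finitely generated subgroup `Λ` of a group `Γ` has centre of finite index at most `m`,
then the centre of `Γ` has finite index at most `m`. -/
theorem center_index_le_of_fg_subgroups {Γ : Type*} [Group Γ] (m : ℕ) (hm : 0 < m)
    (h : ∀ Λ : Subgroup Γ, Λ.FG →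
      (Subgroup.center Λ).index ≠ 0 ∧ (Subgroup.center Λ).index ≤ m) :
    (Subgroup.center Γ).index ≠ 0 ∧ (Subgroup.center Γ).index ≤ m := by
  by_contra hcon
  -- Obtain m+1 elements in pairwise distinct cosets of the center
  have hbig : ∃ g : Fin (m + 1) → Γ,
      Function.Injective (fun i => (QuotientGroup.mk (g i) : Γ ⧸ Subgroup.center Γ)) := by
    have : (Subgroup.center Γ).index = 0 ∨ m + 1 ≤ (Subgroup.center Γ).index := by
      rw [not_and_or] at hcon
      rcases hcon with h0 | hle
      · exact Or.inl (not_not.mp h0)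
      · exact Or.inr (by omega)
    obtain ⟨f, hf⟩ : ∃ f : Fin (m + 1) → Γ ⧸ Subgroup.center Γ, Function.Injective f := by
      rcases this with h0 | hle
      · rcases Nat.card_eq_zero.mp (show Nat.card (Γ ⧸ Subgroup.center Γ) = 0 from h0)
          with he | hi
        · exact (he.false (1 : Γ ⧸ Subgroup.center Γ)).elim
        · exact ⟨fun i => Infinite.natEmbedding _ i.val,
            (Infinite.natEmbedding _).injective.comp Fin.val_injective⟩
      · have hfin : Finite (Γ ⧸ Subgroup.center Γ) :=
          Nat.finite_of_card_ne_zero (show (Subgroup.center Γ).index ≠ 0 by omega)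
        have := Fintype.ofFinite (Γ ⧸ Subgroup.center Γ)
        have hcard : Fintype.card (Fin (m + 1)) ≤ Fintype.card (Γ ⧸ Subgroup.center Γ) := by
          rw [Fintype.card_fin, ← Nat.card_eq_fintype_card]
          exact hle
        obtain ⟨f⟩ := Function.Embedding.nonempty_of_card_le hcard
        exact ⟨f, f.injective⟩
    choose g hg using fun i => QuotientGroup.mk_surjective (f i)
    exact ⟨g, fun i j hij => hf (by simpa [hg] using hij)⟩
  obtain ⟨g, hg⟩ := hbig
  -- choose witnesses of non-centrality
  have hx : ∀ i j : Fin (m + 1), ∃ x : Γ, (g i)⁻¹ * g j ∉ Subgroup.center Γ →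
      x * ((g i)⁻¹ * g j) ≠ ((g i)⁻¹ * g j) * x := by
    intro i j
    by_cases hc : (g i)⁻¹ * g j ∈ Subgroup.center Γ
    · exact ⟨1, fun hn => absurd hc hn⟩
    · have := hc
      rw [Subgroup.mem_center_iff] at this
      push_neg at this
      obtain ⟨x, hxne⟩ := this
      exact ⟨x, fun _ => hxne⟩
  choose x hxspec using hx
  set S : Set Γ := Set.range g ∪ Set.range (Function.uncurry x) with hS
  have hSfin : S.Finite := (Set.finite_range g).union (Set.finite_range _)
  set Λ : Subgroup Γ := Subgroup.closure S with hΛ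
  have hΛfg : Λ.FG := (Subgroup.fg_iff _).mpr ⟨S, rfl, hSfin⟩
  have hgΛ : ∀ i, g i ∈ Λ := fun i => Subgroup.subset_closure (Or.inl ⟨i, rfl⟩)
  have hxΛ : ∀ i j, x i j ∈ Λ := fun i j => Subgroup.subset_closure (Or.inr ⟨(i, j), rfl⟩)
  set gg : Fin (m + 1) → Λ := fun i => ⟨g i, hgΛ i⟩ with hgg
  have hinj : Function.Injective (fun i => (QuotientGroup.mk (gg i) : Λ ⧸ Subgroup.center Λ)) := by
    intro i j hij
    by_contra hne
    have hnotc : (g i)⁻¹ * g j ∉ Subgroup.center Γ := by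
      intro hc
      exact hne (hg (QuotientGroup.eq.mpr hc))
    have hcenter : (gg i)⁻¹ * gg j ∈ Subgroup.center Λ := QuotientGroup.eq.mp hij
    rw [Subgroup.mem_center_iff] at hcenter
    have := hcenter ⟨x i j, hxΛ i j⟩
    apply hxspec i j hnotc
    have := congrArg (Subtype.val) this
    simpa using this
  have hΛh := h Λ hΛfg
  have hfin : Finite (Λ ⧸ Subgroup.center Λ) :=
    Nat.finite_of_card_ne_zero (by simpa [Subgroup.index] using hΛh.1)
  have hle : m + 1 ≤ (Subgroup.center Λ).index := by
    have := Nat.card_le_card_of_injective _ hinj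
    simpa [Subgroup.index] using this
  omega
end

section
/- Let Γ be a group whose commutator set comm(Γ) has exactly two elements, and let z be the unique non-identity element of comm(Γ). Then z² = 1, z lies in the center Z(Γ), and the commutator subgroup [Γ,Γ] equals {1, z} (in particular [Γ,Γ] has order 2). -/
open scoped commutatorElement

/-- If the set of commutators of a group `Γ` has exactly two elements, and `z` is the unique
non-identity commutator, then `z² = 1`, `z` is central, and the commutator subgroup is `{1, z}`. -/
theorem commutator_eq_of_commSet_two {Γ : Type*} [Group Γ]
    (h2 : {w : Γ | ∃ x y : Γ, ⁅x, y⁆ = w}.encard = 2)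
    (z : Γ) (hz : ∃ x y : Γ, ⁅x, y⁆ = z) (hz1 : z ≠ 1) :
    z ^ 2 = 1 ∧ z ∈ Subgroup.center Γ ∧ (commutator Γ : Set Γ) = {1, z} := by
  set S : Set Γ := {w : Γ | ∃ x y : Γ, ⁅x, y⁆ = w} with hS
  have h1S : (1 : Γ) ∈ S := ⟨1, 1, by simp⟩
  have hzS : z ∈ S := hz
  -- S = {1, z}
  obtain ⟨a, b, hab, habS⟩ := Set.encard_eq_two.mp h2
  have hSeq : S = {1, z} := by
    rw [habS]
    rw [habS] at h1S hzS
    rcases h1S with rfl | rfl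
    · rcases hzS with rfl | rfl
      · exact absurd rfl hz1.symm
      · rfl
    · rcases hzS with rfl | rfl
      · exact Set.pair_comm _ _
      · exact absurd rfl hz1
  have key : ∀ x y : Γ, ⁅x, y⁆ = 1 ∨ ⁅x, y⁆ = z := by
    intro x y
    have : ⁅x, y⁆ ∈ S := ⟨x, y, rfl⟩
    rw [hSeq] at this
    exact this
  -- z⁻¹ is a commutator
  obtain ⟨x, y, hxy⟩ := hz
  have hzinv : z⁻¹ = z := by
    have : ⁅y, x⁆ = z⁻¹ := by rw [← hxy, commutatorElement_inv]
    rcases key y x with h | h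
    · rw [this] at h; exact absurd (inv_eq_one.mp h) hz1
    · rw [this] at h; exact h
  have hsq : z ^ 2 = 1 := by
    rw [pow_two, mul_eq_one_iff_inv_eq]; exact hzinv
  -- z central
  have hcent : z ∈ Subgroup.center Γ := by
    rw [Subgroup.mem_center_iff]
    intro g
    have hconj : g * z * g⁻¹ ∈ S := by
      refine ⟨g * x * g⁻¹, g * y * g⁻¹, ?_⟩
      rw [← hxy]; group
    rw [hSeq] at hconj
    rcases hconj with h | h
    · exfalso; apply hz1
      have := congrArg (fun w => g⁻¹ * w * g) h
      simpa [mul_assoc] using this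
    · have := congrArg (fun w => w * g) h
      simpa [mul_assoc] using this
  refine ⟨hsq, hcent, ?_⟩
  -- the subgroup {1, z}
  have hH : ∃ H : Subgroup Γ, (H : Set Γ) = {1, z} := by
    refine ⟨{ carrier := Insert.insert 1 (Set.singleton z)
              one_mem' := Or.inl rfl
              mul_mem' := ?_
              inv_mem' := ?_ }, rfl⟩
    · intro a b ha hb
      simp only [Set.mem_insert_iff, Set.mem_singleton_iff] at ha hb ⊢
      rcases ha with rfl | rfl <;> rcases hb with rfl | rfl <;> simp_all [← pow_two] <;> exact Set.mem_singleton _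
    · intro a ha
      simp only [Set.mem_insert_iff, Set.mem_singleton_iff] at ha ⊢
      rcases ha with rfl | rfl
      · simp
      · exact Or.inr hzinv
  obtain ⟨H, hHeq⟩ := hH
  have hle : commutator Γ ≤ H := by
    rw [commutator_eq_closure]
    apply Subgroup.closure_le H |>.mpr
    intro w hw
    have : w ∈ S := hw
    rw [hSeq] at this
    exact hHeq.symm ▸ this
  have hge : H ≤ commutator Γ := by
    intro w hw
    have hw' : w ∈ ({1, z} : Set Γ) := hHeq ▸ hw
    rcases hw' with rfl | rfl
    · exact Subgroup.one_mem _
    · rw [← hxy]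
      exact Subgroup.commutator_mem_commutator (Subgroup.mem_top x) (Subgroup.mem_top y)
  rw [le_antisymm hle hge, hHeq]
end

section
/- Let Γ be a group whose commutator set comm(Γ) has exactly two elements, and let z be the unique non-identity element of comm(Γ). Let π be a topologically irreducible unitary representation of Γ on a complex Hilbert space H whose dimension (rank over ℂ) is at least 2. Then π(z) = −id_H; consequently, whenever x and y are elements of Γ that do not commute, the operators π(x) and π(y) anti-commute, i.e. π(x)π(y) + π(y)π(x) = 0. -/
open scoped commutatorElement

open StarAlgebra in
lemma commute_of_mem_elemental' {A : Type*} [CStarAlgebra A] {a b x : A}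
    (h : Commute b a) (h' : Commute b (star a)) (hx : x ∈ elemental ℂ a) :
    Commute b x := by
  induction hx using elemental.induction_on with
  | self => exact h
  | star_self => exact h'
  | algebraMap r => exact (Algebra.commutes r b).symm
  | add u hu v hv pu pv => exact pu.add_right pv
  | mul u hu v hv pu pv => exact pu.mul_right pv
  | closure s hs hmem v hv =>
    exact closure_minimal (fun u hu => hmem u hu)
      (isClosed_eq (continuous_const.mul continuous_id) (continuous_id.mul continuous_const)) hv

lemma cfc_mem_elemental' {A : Type*} [CStarAlgebra A] (a : A) (ha : IsStarNormal a) (f : ℂ → ℂ) :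
    cfc f a ∈ StarAlgebra.elemental ℂ a := by
  by_cases hf : ContinuousOn f (spectrum ℂ a)
  · rw [cfc_apply f a ha hf, cfcHom_eq_of_isStarNormal]
    exact SetLike.coe_mem _
  · rw [cfc_apply_of_not_continuousOn a hf]; exact zero_mem _

lemma schur_scalar {H : Type*} [NormedAddCommGroup H] [InnerProductSpace ℂ H] [CompleteSpace H]
    [Nontrivial H] {Γ : Type*} [Group Γ] (π : Γ →* unitary (H →L[ℂ] H))
    (hirr : ∀ U : Submodule ℂ H, IsClosed (U : Set H) →
      (∀ g : Γ, ∀ v ∈ U, (π g : H →L[ℂ] H) v ∈ U) → U = ⊥ ∨ U = ⊤)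
    (A : H →L[ℂ] H) (hA : IsStarNormal A)
    (hcm : ∀ g : Γ, Commute ((π g : H →L[ℂ] H)) A)
    (hcm' : ∀ g : Γ, Commute ((π g : H →L[ℂ] H)) (star A)) :
    ∃ c : ℂ, A = c • 1 := by
  have hnt : Nontrivial (H →L[ℂ] H) := by
    obtain ⟨v, hv⟩ := exists_ne (0 : H)
    exact ⟨1, 0, fun h => hv (by simpa using DFunLike.congr_fun h v)⟩
  -- spectrum is a subsingleton
  have hsub : ∀ x ∈ spectrum ℂ A, ∀ y ∈ spectrum ℂ A, x = y := by
    by_contra hne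
    push_neg at hne
    obtain ⟨x, hx, y, hy, hxy⟩ := hne
    set r : ℝ := dist x y / 2 with hr
    have hr0 : 0 < r := by
      have := dist_pos.mpr hxy
      positivity
    set f : ℂ → ℂ := fun w => (((r - dist w x) ⊔ 0 : ℝ) : ℂ) with hf
    set g : ℂ → ℂ := fun w => (((r - dist w y) ⊔ 0 : ℝ) : ℂ) with hg
    have hfc : Continuous f := by fun_prop
    have hgc : Continuous g := by fun_prop
    have hfg : ∀ w, f w * g w = 0 := by
      intro w
      rcases le_or_gt (r : ℝ) (dist w x) with h | h
      · have h1 : r - dist w x ≤ 0 := by linarith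
        have : f w = 0 := by simp [hf, sup_eq_right.mpr h1]
        simp [this]
      · have : g w = 0 := by
          have hd : dist x y ≤ dist x w + dist w y := dist_triangle x w y
          have h2 : r ≤ dist w y := by
            rw [dist_comm] at h
            have : dist x y = 2 * r := by rw [hr]; ring
            linarith
          have h1 : r - dist w y ≤ 0 := by linarith
          simp [hg, sup_eq_right.mpr h1]
        simp [this]
    set F := cfc f A with hF
    set G := cfc g A with hG
    have hFG : F * G = 0 := by
      rw [hF, hG, ← cfc_mul f g A]
      calc cfc (fun w => f w * g w) A = cfc (fun _ : ℂ => (0 : ℂ)) A := by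
            exact cfc_congr (fun w _ => hfg w)
        _ = 0 := by simp
    have hfx : f x = (r : ℂ) := by simp [hf, sup_eq_left.mpr hr0.le]
    have hgy : g y = (r : ℂ) := by simp [hg, sup_eq_left.mpr hr0.le]
    have hFne : F ≠ 0 := by
      intro h0
      have := norm_apply_le_norm_cfc f A hx (hfc.continuousOn) hA
      rw [← hF, h0, hfx] at this
      simp at this
      linarith
    have hGne : G ≠ 0 := by
      intro h0
      have := norm_apply_le_norm_cfc g A hy (hgc.continuousOn) hA
      rw [← hG, h0, hgy] at this
      simp at this
      linarith
    -- closed invariant subspace: closure of range of F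
    set M := (LinearMap.range (F : H →ₗ[ℂ] H)).topologicalClosure with hM
    have hMc : IsClosed (M : Set H) := (LinearMap.range (F : H →ₗ[ℂ] H)).isClosed_topologicalClosure
    have hcomF : ∀ g₀ : Γ, Commute ((π g₀ : H →L[ℂ] H)) F :=
      fun g₀ => commute_of_mem_elemental' (hcm g₀) (hcm' g₀) (cfc_mem_elemental' A hA f)
    have hMinv : ∀ g₀ : Γ, ∀ v ∈ M, (π g₀ : H →L[ℂ] H) v ∈ M := by
      intro g₀ v hv
      have hmap : Set.MapsTo ((π g₀ : H →L[ℂ] H))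
          (LinearMap.range (F : H →ₗ[ℂ] H) : Set H) (LinearMap.range (F : H →ₗ[ℂ] H) : Set H) := by
        rintro _ ⟨w, rfl⟩
        refine ⟨(π g₀ : H →L[ℂ] H) w, ?_⟩
        have := hcomF g₀
        calc F ((π g₀ : H →L[ℂ] H) w) = (F * (π g₀ : H →L[ℂ] H)) w := rfl
          _ = ((π g₀ : H →L[ℂ] H) * F) w := by rw [(hcomF g₀).eq]
          _ = _ := rfl
      have hv' : v ∈ closure (LinearMap.range (F : H →ₗ[ℂ] H) : Set H) := hv
      have := (map_mem_closure ((π g₀ : H →L[ℂ] H)).continuous hv' hmap)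
      exact this
    rcases hirr M hMc hMinv with hbot | htop
    · apply hFne
      ext v
      have : F v ∈ M := (LinearMap.range (F : H →ₗ[ℂ] H)).le_topologicalClosure ⟨v, rfl⟩
      rw [hbot] at this
      simpa using this
    · apply hGne
      have hzero : ∀ v ∈ (LinearMap.range (F : H →ₗ[ℂ] H) : Set H), G v = 0 := by
        rintro _ ⟨w, rfl⟩
        calc G (F w) = (G * F) w := rfl
          _ = (F * G) w := by rw [(cfc_commute_cfc g f A).eq]
          _ = 0 := by rw [hFG]; rfl
      ext v
      have hv : v ∈ M := htop ▸ Submodule.mem_top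
      have hv' : v ∈ closure (LinearMap.range (F : H →ₗ[ℂ] H) : Set H) := hv
      have : G v ∈ closure ({0} : Set H) := by
        refine map_mem_closure G.continuous hv' ?_
        intro u hu
        simp [hzero u hu]
      simpa using this
  obtain ⟨c, hc0⟩ := spectrum.nonempty A
  refine ⟨c, ?_⟩
  have key : A - c • 1 = cfc (fun w : ℂ => w - c) A := by
    rw [cfc_sub (fun w : ℂ => w) (fun _ => c) A, cfc_id' ℂ A, cfc_const c A]
    simp [Algebra.algebraMap_eq_smul_one]
  have hnorm : ‖A - c • 1‖ ≤ 0 := by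
    rw [key]
    refine norm_cfc_le le_rfl ?_
    intro w hw
    rw [hsub w hw c hc0]
    simp
  have h0 : A - c • 1 = 0 :=
    norm_eq_zero.mp (le_antisymm hnorm (norm_nonneg _))
  exact sub_eq_zero.mp h0

/-- If the commutator set of `Γ` has exactly two elements with unique non-identity element `z`,
and `π` is a topologically irreducible unitary representation of `Γ` on a complex Hilbert space
of dimension at least 2, then `π z = -1`; consequently the images of two non-commuting elements
anti-commute. -/
theorem irrRep_apply_comm_eq_neg_one {Γ : Type*} [Group Γ]
    (h2 : {w : Γ | ∃ x y : Γ, ⁅x, y⁆ = w}.encard = 2)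
    (z : Γ) (hz : ∃ x y : Γ, ⁅x, y⁆ = z) (hz1 : z ≠ 1)
    {H : Type*} [NormedAddCommGroup H] [InnerProductSpace ℂ H] [CompleteSpace H]
    (π : Γ →* unitary (H →L[ℂ] H))
    (hirr : ∀ U : Submodule ℂ H, IsClosed (U : Set H) →
      (∀ g : Γ, ∀ v ∈ U, (π g : H →L[ℂ] H) v ∈ U) → U = ⊥ ∨ U = ⊤)
    (hdim : 2 ≤ Module.rank ℂ H) :
    (π z : H →L[ℂ] H) = -1 ∧
      ∀ x y : Γ, x * y ≠ y * x →
        (π x : H →L[ℂ] H) * (π y : H →L[ℂ] H) + (π y : H →L[ℂ] H) * (π x : H →L[ℂ] H) = 0 := by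
  classical
  have h1S : (1 : Γ) ∈ {w : Γ | ∃ x y : Γ, ⁅x, y⁆ = w} := ⟨1, 1, by simp⟩
  have hzS : z ∈ {w : Γ | ∃ x y : Γ, ⁅x, y⁆ = w} := hz
  obtain ⟨a, b, hab, hSab⟩ := Set.encard_eq_two.mp h2
  have hmem : ∀ w ∈ {w : Γ | ∃ x y : Γ, ⁅x, y⁆ = w}, w = 1 ∨ w = z := by
    intro w hw
    rw [hSab] at h1S hzS hw
    simp only [Set.mem_insert_iff, Set.mem_singleton_iff] at h1S hzS hw
    rcases h1S with h1 | h1 <;> rcases hzS with hzz | hzz <;> rcases hw with h3 | h3 <;>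
      first
        | exact absurd (hzz.trans h1.symm) hz1
        | exact Or.inl (h3.trans h1.symm)
        | exact Or.inr (h3.trans hzz.symm)
  have hzinv : z⁻¹ = z := by
    obtain ⟨x, y, hxy⟩ := hz
    have hmemz : z⁻¹ ∈ {w : Γ | ∃ x y : Γ, ⁅x, y⁆ = w} :=
      ⟨y, x, by rw [← commutatorElement_inv, hxy]⟩
    rcases hmem _ hmemz with h | h
    · exact absurd (inv_eq_one.mp h) hz1
    · exact h
  have hz2 : z * z = 1 := by
    calc z * z = z * z⁻¹ := by rw [hzinv]
      _ = 1 := mul_inv_cancel z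
  have hcen : ∀ g : Γ, g * z = z * g := by
    intro g
    rcases hmem ⁅g, z⁆ ⟨g, z, rfl⟩ with h | h
    · exact commutatorElement_eq_one_iff_mul_comm.mp h
    · exfalso
      rw [commutatorElement_def] at h
      have h1 : g * z * g⁻¹ = z * z := by
        have := congrArg (· * z) h
        simpa [mul_assoc] using this
      rw [hz2] at h1
      have hzeq : z = 1 := by
        have := congrArg (fun t => g⁻¹ * t * g) h1
        simpa [mul_assoc] using this
      exact hz1 hzeq
  -- operator level
  have hmul : ∀ a b : Γ, ((π (a * b) : H →L[ℂ] H)) =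
      (π a : H →L[ℂ] H) * (π b : H →L[ℂ] H) := by
    intro a b; rw [map_mul]; rfl
  have hone : ((π 1 : H →L[ℂ] H)) = 1 := by rw [map_one]; rfl
  have hstar : ∀ g : Γ, star ((π g : H →L[ℂ] H)) = (π g⁻¹ : H →L[ℂ] H) := by
    intro g
    rw [← Unitary.coe_star, Unitary.star_eq_inv, ← map_inv]
  have hnt : Nontrivial H :=
    rank_pos_iff_nontrivial.mp (lt_of_lt_of_le (by norm_num) hdim)
  have hZcomm : ∀ g : Γ, Commute ((π g : H →L[ℂ] H)) ((π z : H →L[ℂ] H)) := by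
    intro g
    show _ * _ = _ * _
    rw [← hmul, ← hmul, hcen g]
  have hZstar : star ((π z : H →L[ℂ] H)) = (π z : H →L[ℂ] H) := by
    rw [hstar, hzinv]
  have hZnormal : IsStarNormal ((π z : H →L[ℂ] H)) := ⟨by rw [hZstar]⟩
  obtain ⟨c, hcZ⟩ := schur_scalar π hirr _ hZnormal hZcomm (fun g => by rw [hZstar]; exact hZcomm g)
  have hZ2 : (π z : H →L[ℂ] H) * (π z : H →L[ℂ] H) = 1 := by
    rw [← hmul, hz2, hone]
  obtain ⟨v0, hv0⟩ := exists_ne (0 : H)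
  have hcc : c * c = 1 := by
    have h1 : ((c • (1 : H →L[ℂ] H)) * (c • 1)) = 1 := by rw [← hcZ]; exact hZ2
    have h2 := congrArg (fun T : H →L[ℂ] H => T v0) h1
    simp only [ContinuousLinearMap.mul_apply, ContinuousLinearMap.smul_apply,
      ContinuousLinearMap.one_apply, smul_smul] at h2
    have h3 : (c * c - 1) • v0 = 0 := by rw [sub_smul, one_smul, h2, sub_self]
    rcases smul_eq_zero.mp h3 with h | h
    · exact sub_eq_zero.mp h
    · exact absurd h hv0
  rcases mul_self_eq_one_iff.mp hcc with hc1 | hc1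
  · exfalso
    have hZ1 : ((π z : H →L[ℂ] H)) = 1 := by rw [hcZ, hc1, one_smul]
    have hcomm : ∀ a b : Γ, Commute ((π a : H →L[ℂ] H)) ((π b : H →L[ℂ] H)) := by
      intro a b
      have hπw : ((π ⁅a, b⁆ : H →L[ℂ] H)) = 1 := by
        rcases hmem ⁅a, b⁆ ⟨a, b, rfl⟩ with h' | h'
        · rw [h', hone]
        · rw [h']; exact hZ1
      have hdecomp : a * b = ⁅a, b⁆ * (b * a) := by group
      show (π a : H →L[ℂ] H) * (π b : H →L[ℂ] H) = (π b : H →L[ℂ] H) * (π a : H →L[ℂ] H)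
      rw [← hmul, ← hmul, hdecomp, hmul, hπw, one_mul]
    have hscal : ∀ g : Γ, ∃ cg : ℂ, ((π g : H →L[ℂ] H)) = cg • 1 := by
      intro g
      refine schur_scalar π hirr _ ⟨?_⟩ (fun g' => hcomm g' g) (fun g' => ?_)
      · rw [hstar]; exact hcomm g⁻¹ g
      · rw [hstar]; exact hcomm g' g⁻¹
    haveI := FiniteDimensional.span_of_finite ℂ (Set.finite_singleton v0)
    have hclosed : IsClosed ((Submodule.span ℂ {v0} : Submodule ℂ H) : Set H) :=
      Submodule.closed_of_finiteDimensional _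
    have hinv : ∀ g : Γ, ∀ v ∈ Submodule.span ℂ ({v0} : Set H),
        (π g : H →L[ℂ] H) v ∈ Submodule.span ℂ ({v0} : Set H) := by
      intro g v hv
      obtain ⟨cg, hcg⟩ := hscal g
      rw [hcg]
      simpa using Submodule.smul_mem _ cg hv
    rcases hirr _ hclosed hinv with hbot | htop
    · have : v0 ∈ (⊥ : Submodule ℂ H) := hbot ▸ Submodule.mem_span_singleton_self v0
      exact hv0 (by simpa using this)
    · have hr1 : Module.rank ℂ H ≤ 1 := by
        rw [← rank_top ℂ H, ← htop]
        calc Module.rank ℂ (Submodule.span ℂ ({v0} : Set H)) ≤ Cardinal.mk ({v0} : Set H) :=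
              rank_span_le _
          _ = 1 := Cardinal.mk_singleton v0
      exact absurd (hdim.trans hr1) (by norm_num)
  · have hZneg : ((π z : H →L[ℂ] H)) = -1 := by rw [hcZ, hc1]; simp
    refine ⟨hZneg, fun x y hxyne => ?_⟩
    rcases hmem ⁅x, y⁆ ⟨x, y, rfl⟩ with h' | h'
    · exact absurd (commutatorElement_eq_one_iff_mul_comm.mp h') hxyne
    · have hdecomp : x * y = ⁅x, y⁆ * (y * x) := by group
      have hkey : (π x : H →L[ℂ] H) * (π y : H →L[ℂ] H) =
          (π z : H →L[ℂ] H) * ((π y : H →L[ℂ] H) * (π x : H →L[ℂ] H)) := by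
        rw [← hmul, ← hmul, hdecomp, hmul, h']
      rw [hkey, hZneg, neg_one_mul]
      exact neg_add_cancel _
end

section
/- Let Γ be a group whose commutator set comm(Γ) has exactly two elements. Let π be an irreducible unitary representation of Γ on a finite-dimensional complex inner product space H with dim H ≥ 2, and let x be an element of Γ not lying in the center Z(Γ). Then the trace of π(x) is zero. -/
open scoped commutatorElement

/-- If the commutator set of `Γ` has exactly two elements, `π` is an irreducible unitary
representation of `Γ` on a finite-dimensional complex inner product space of dimension at
least 2, and `x` is a non-central element of `Γ`, then `Tr (π x) = 0`. -/
theorem trace_eq_zero_of_not_central {Γ : Type*} [Group Γ]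
    (h2 : {w : Γ | ∃ x y : Γ, ⁅x, y⁆ = w}.encard = 2)
    {H : Type*} [NormedAddCommGroup H] [InnerProductSpace ℂ H] [FiniteDimensional ℂ H]
    (π : Γ →* (H →ₗ[ℂ] H))
    (hu : ∀ g : Γ, ∀ v w : H, (inner ℂ (π g v) (π g w) : ℂ) = inner ℂ v w)
    (hirr : ∀ U : Submodule ℂ H, (∀ g : Γ, ∀ v ∈ U, π g v ∈ U) → U = ⊥ ∨ U = ⊤)
    (hdim : 2 ≤ Module.finrank ℂ H)
    (x : Γ) (hx : x ∉ Subgroup.center Γ) :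
    LinearMap.trace ℂ H (π x) = 0 := by
  have hnt : Nontrivial H := Module.nontrivial_of_finrank_pos (R := ℂ) (by omega)
  -- Schur-type: any operator commuting with the whole image is scalar
  have schur : ∀ T : H →ₗ[ℂ] H, (∀ g : Γ, T * π g = π g * T) →
      ∃ μ : ℂ, T = μ • (1 : H →ₗ[ℂ] H) := by
    intro T hT
    obtain ⟨μ, hμ⟩ := Module.End.exists_eigenvalue (T : Module.End ℂ H)
    obtain ⟨v, hvmem, hv0⟩ := hμ.exists_hasEigenvector
    have hvmem' : v ∈ Module.End.eigenspace T μ := hvmem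
    refine ⟨μ, ?_⟩
    have hinv : ∀ g : Γ, ∀ w ∈ Module.End.eigenspace T μ,
        π g w ∈ Module.End.eigenspace T μ := by
      intro g w hw
      rw [Module.End.mem_eigenspace_iff] at hw ⊢
      have := congrArg (fun f : H →ₗ[ℂ] H => f w) (hT g)
      simp only [Module.End.mul_apply] at this
      rw [this, hw, map_smul]
    rcases hirr _ hinv with h | h
    · rw [h] at hvmem'
      exact absurd (by simpa using hvmem') hv0
    · ext w
      have hw : w ∈ Module.End.eigenspace T μ := h ▸ Submodule.mem_top
      simpa [Module.End.mem_eigenspace_iff] using hw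
  -- structure of the commutator set
  set S := {w : Γ | ∃ a b : Γ, ⁅a, b⁆ = w} with hSdef
  have h1S : (1 : Γ) ∈ S := ⟨1, 1, by group⟩
  obtain ⟨a, b, hab, hSab⟩ := Set.encard_eq_two.mp h2
  obtain ⟨c, hc1, hSc⟩ : ∃ c : Γ, c ≠ 1 ∧ S = {1, c} := by
    have h1S' : (1 : Γ) ∈ ({a, b} : Set Γ) := hSab ▸ h1S
    rcases h1S' with h | h
    · refine ⟨b, ?_, ?_⟩
      · rintro rfl; exact hab h.symm
      · rw [hSab, ← h]
    · refine ⟨a, ?_, ?_⟩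
      · rintro rfl; exact hab h
      · rw [hSab, ← h]; exact Set.pair_comm a 1
  have hcomm : ∀ g h : Γ, ⁅g, h⁆ = 1 ∨ ⁅g, h⁆ = c := by
    intro g h
    have : ⁅g, h⁆ ∈ S := ⟨g, h, rfl⟩
    rw [hSc] at this
    exact this
  -- c is central
  have hccen : ∀ g : Γ, c * g = g * c := by
    intro g
    rcases hcomm c g with h | h
    · have := commutatorElement_eq_one_iff_mul_comm.mp h
      exact this
    · exfalso
      apply hc1
      have h3 : g * c⁻¹ * g⁻¹ = 1 := by
        have := congrArg (c⁻¹ * ·) h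
        simpa [commutatorElement_def, mul_assoc] using this
      have hcinv1 : c⁻¹ = 1 := by
        calc c⁻¹ = g⁻¹ * (g * c⁻¹ * g⁻¹) * g := by group
        _ = 1 := by rw [h3]; group
      simpa using congrArg Inv.inv hcinv1
  -- c has order 2
  have hc2 : c * c = 1 := by
    have hcS : c ∈ S := by rw [hSc]; right; rfl
    obtain ⟨p, q, hpq⟩ := hcS
    have hcinv : c⁻¹ ∈ S := ⟨q, p, by rw [← hpq]; group⟩
    rw [hSc, Set.mem_insert_iff, Set.mem_singleton_iff] at hcinv
    rcases hcinv with h | h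
    · exact absurd (by simpa using congrArg Inv.inv h) hc1
    · nth_rewrite 1 [← h]
      exact inv_mul_cancel c
  -- π c is scalar
  obtain ⟨μ, hμ⟩ := schur (π c) (by
    intro g
    rw [← map_mul, ← map_mul, hccen g])
  -- μ * μ = 1
  obtain ⟨v, hv0⟩ := exists_ne (0 : H)
  have hμ2 : μ * μ = 1 := by
    have : π c * π c = 1 := by rw [← map_mul, hc2, map_one]
    rw [hμ] at this
    have := congrArg (fun f : H →ₗ[ℂ] H => f v) this
    simp only [Module.End.mul_apply, LinearMap.smul_apply, Module.End.one_apply,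
      smul_smul] at this
    exact smul_left_injective ℂ hv0 (by simpa using this)
  -- μ ≠ 1 (otherwise the image is commutative and every line is invariant)
  have hμne : μ ≠ 1 := by
    intro hμ1
    have hc_one : π c = 1 := by rw [hμ, hμ1, one_smul]
    have hcommπ : ∀ g h : Γ, π g * π h = π h * π g := by
      intro g h
      have h1 : π ⁅g, h⁆ = 1 := by
        rcases hcomm g h with h' | h' <;> rw [h'] <;> simp [hc_one]
      have hgrp : ⁅g, h⁆ * (h * g) = g * h := by group
      have := congrArg π hgrp
      rw [map_mul, h1, one_mul, map_mul, map_mul] at this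
      rw [this]
    -- every π g is scalar
    have hscal : ∀ g : Γ, ∃ ν : ℂ, π g = ν • (1 : H →ₗ[ℂ] H) := fun g =>
      schur (π g) (fun h => hcommπ g h)
    -- the line through v is invariant
    have hinv : ∀ g : Γ, ∀ w ∈ Submodule.span ℂ {v}, π g w ∈ Submodule.span ℂ {v} := by
      intro g w hw
      obtain ⟨ν, hν⟩ := hscal g
      rw [hν]
      simpa using Submodule.smul_mem _ ν hw
    rcases hirr _ hinv with h | h
    · have hvm := Submodule.mem_span_singleton_self (R := ℂ) v
      rw [h] at hvm
      exact hv0 (by simpa using hvm)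
    · have h1 : Module.finrank ℂ H = 1 := by
        rw [← finrank_top ℂ H, ← h, finrank_span_singleton hv0]
      omega
  have hμneg : μ = -1 := by
    rcases mul_self_eq_one_iff.mp hμ2 with h | h
    · exact absurd h hμne
    · exact h
  -- find y not commuting with x
  have hxy : ∃ y : Γ, y * x ≠ x * y := by
    by_contra h
    push_neg at h
    exact hx (Subgroup.mem_center_iff.mpr h)
  obtain ⟨y, hy⟩ := hxy
  have hyx : ⁅y, x⁆ = c := by
    rcases hcomm y x with h | h
    · exact absurd (commutatorElement_eq_one_iff_mul_comm.mp h) hy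
    · exact h
  have hconj : y * x * y⁻¹ = c * x := by
    rw [← hyx]; group
  -- trace computation
  have htr : LinearMap.trace ℂ H (π (y * x * y⁻¹)) = LinearMap.trace ℂ H (π x) := by
    rw [show (y * x * y⁻¹ : Γ) = y * (x * y⁻¹) from by group, map_mul,
      LinearMap.trace_mul_comm, ← map_mul, show (x * y⁻¹ * y : Γ) = x from by group]
  have key : LinearMap.trace ℂ H (π x) = -(LinearMap.trace ℂ H (π x)) := by
    nth_rewrite 1 [← htr]
    rw [hconj, map_mul, hμ, hμneg]
    simp
  linear_combination key / 2
end

section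
/- Let Γ be a group whose commutator set comm(Γ) has exactly two elements. Let π be an irreducible unitary representation of Γ on a 2-dimensional complex inner product space H, let x be an element of Γ not lying in the center Z(Γ), and let c be an element of Γ that commutes with x but does not lie in Z(Γ). Then π(c) is a scalar multiple of π(x), i.e. there exists μ ∈ ℂ with π(c) = μ · π(x). -/
open scoped commutatorElement

/-- If the commutator set of `Γ` has exactly two elements, `π` is an irreducible unitary
representation of `Γ` on a 2-dimensional complex inner product space, `x ∉ Z(Γ)`, and `c`
commutes with `x` but is not central, then `π c` is a scalar multiple of `π x`. -/
theorem exists_smul_of_centralizer_not_central {Γ : Type*} [Group Γ]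
    (h2 : {w : Γ | ∃ x y : Γ, ⁅x, y⁆ = w}.encard = 2)
    {H : Type*} [NormedAddCommGroup H] [InnerProductSpace ℂ H] [FiniteDimensional ℂ H]
    (π : Γ →* (H →ₗ[ℂ] H))
    (hu : ∀ g : Γ, ∀ v w : H, (inner ℂ (π g v) (π g w) : ℂ) = inner ℂ v w)
    (hirr : ∀ U : Submodule ℂ H, (∀ g : Γ, ∀ v ∈ U, π g v ∈ U) → U = ⊥ ∨ U = ⊤)
    (hdim : Module.finrank ℂ H = 2)
    (x : Γ) (hx : x ∉ Subgroup.center Γ)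
    (c : Γ) (hcx : c * x = x * c) (hc : c ∉ Subgroup.center Γ) :
    ∃ μ : ℂ, π c = μ • π x := by
  classical
  have hntH : Nontrivial H := Module.nontrivial_of_finrank_pos (R := ℂ) (by omega)
  -- The commutator set is {1, w} for some w ≠ 1
  set S := {w : Γ | ∃ x y : Γ, ⁅x, y⁆ = w} with hSdef
  have h1S : (1 : Γ) ∈ S := ⟨1, 1, commutatorElement_self 1⟩
  obtain ⟨w, hwne, hSw⟩ : ∃ w : Γ, w ≠ 1 ∧ S = {1, w} := by
    obtain ⟨a, b, hab, hSab⟩ := Set.encard_eq_two.mp h2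
    rw [hSab] at h1S
    rcases h1S with h | h
    · exact ⟨b, by rw [← h] at hab; exact fun hb => hab hb.symm, by rw [hSab, ← h]⟩
    · exact ⟨a, by rw [← h] at hab; exact hab, by rw [hSab, ← h, Set.pair_comm]⟩
  have hcomm : ∀ p q : Γ, ⁅p, q⁆ = 1 ∨ ⁅p, q⁆ = w := by
    intro p q
    have hm : ⁅p, q⁆ ∈ S := ⟨p, q, rfl⟩
    rw [hSw] at hm
    simpa using hm
  obtain ⟨p₀, q₀, hpq₀⟩ : w ∈ S := by rw [hSw]; right; rfl
  -- w is central
  have hwc : ∀ g : Γ, g * w = w * g := by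
    intro g
    have hm : g * w * g⁻¹ ∈ S := ⟨g * p₀ * g⁻¹, g * q₀ * g⁻¹, by
      rw [← conjugate_commutatorElement, hpq₀]⟩
    rw [hSw] at hm
    rcases hm with h | h
    · exfalso
      apply hwne
      have h1 : g * w = g := by
        have := congrArg (· * g) h
        simpa [mul_assoc] using this
      simpa using congrArg (g⁻¹ * ·) h1
    · have := congrArg (· * g) h
      simpa [mul_assoc] using this
  -- w has order 2
  have hw2 : w * w = 1 := by
    have hm : w⁻¹ ∈ S := ⟨q₀, p₀, by rw [← commutatorElement_inv, hpq₀]⟩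
    rw [hSw] at hm
    rcases hm with h | h
    · exact absurd (by simpa using congrArg (·⁻¹) h) hwne
    · rw [show w * w = w * w⁻¹ by rw [h], mul_inv_cancel]
  -- basic representation facts
  have hπmul : ∀ p q : Γ, π p * π q = π ⁅p, q⁆ * (π q * π p) := by
    intro p q
    rw [← map_mul, ← map_mul, ← map_mul]
    congr 1
    group
  have hone_ne : (1 : H →ₗ[ℂ] H) ≠ 0 := by
    intro h
    obtain ⟨v, hv⟩ := exists_ne (0 : H)
    exact hv (by simpa using LinearMap.congr_fun h v)
  have hπne : ∀ g : Γ, π g ≠ 0 := by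
    intro g hg
    apply hone_ne
    rw [show (1 : H →ₗ[ℂ] H) = π g * π g⁻¹ by rw [← map_mul, mul_inv_cancel, map_one], hg,
      zero_mul]
  -- Schur's lemma
  have schur : ∀ T : H →ₗ[ℂ] H, (∀ g : Γ, T * π g = π g * T) → ∃ μ : ℂ, T = μ • 1 := by
    intro T hT
    obtain ⟨μ, hμ⟩ := Module.End.exists_eigenvalue (T : Module.End ℂ H)
    refine ⟨μ, ?_⟩
    set U := Module.End.eigenspace (T : Module.End ℂ H) μ with hU
    have hinv : ∀ g : Γ, ∀ v ∈ U, π g v ∈ U := by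
      intro g v hv
      rw [Module.End.mem_eigenspace_iff] at hv ⊢
      calc T (π g v) = π g (T v) := by
            have := LinearMap.congr_fun (hT g) v; simpa using this
        _ = π g (μ • v) := by rw [hv]
        _ = μ • π g v := map_smul _ _ _
    rcases hirr U hinv with h | h
    · exact absurd h hμ
    · apply LinearMap.ext
      intro v
      have hv : v ∈ U := h ▸ Submodule.mem_top
      rw [Module.End.mem_eigenspace_iff] at hv
      simpa using hv
  -- π w = λ • 1 with λ = -1
  have hWcomm : ∀ g : Γ, π w * π g = π g * π w := by
    intro g
    rw [← map_mul, ← map_mul, hwc g]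
  obtain ⟨l, hl⟩ := schur (π w) hWcomm
  have hl2 : l * l = 1 := by
    have h1 : π w * π w = 1 := by rw [← map_mul, hw2, map_one]
    rw [hl, smul_mul_smul_comm, mul_one] at h1
    have h2 : (l * l) • (1 : H →ₗ[ℂ] H) = (1 : ℂ) • 1 := by rw [h1, one_smul]
    exact smul_left_injective ℂ hone_ne h2
  have hlneg : l = -1 := by
    have hcases : l = 1 ∨ l = -1 := by
      have h0 : (l - 1) * (l + 1) = 0 := by linear_combination hl2
      rcases mul_eq_zero.mp h0 with h | h
      · left; exact sub_eq_zero.mp h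
      · right; exact eq_neg_of_add_eq_zero_left h
    rcases hcases with h | h
    · -- if π w = 1 then the image is commutative, every π g is scalar, contradiction with dim 2
      exfalso
      have hW1 : π w = 1 := by rw [hl, h, one_smul]
      have hab : ∀ p q : Γ, π p * π q = π q * π p := by
        intro p q
        rcases hcomm p q with hc1 | hc1 <;> rw [hπmul p q, hc1]
        · rw [map_one, one_mul]
        · rw [hW1, one_mul]
      obtain ⟨v, hv⟩ := exists_ne (0 : H)
      have hsc : ∀ g : Γ, ∃ μ : ℂ, π g = μ • 1 := fun g => schur (π g) fun h' => hab g h'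
      have hinv : ∀ g : Γ, ∀ u ∈ (ℂ ∙ v), π g u ∈ (ℂ ∙ v) := by
        intro g u hu
        obtain ⟨μ, hμ⟩ := hsc g
        have hgu : π g u = μ • u := by rw [hμ]; simp
        rw [hgu]
        exact Submodule.smul_mem _ μ hu
      rcases hirr _ hinv with h' | h'
      · exact hv (by simpa [h'] using Submodule.mem_span_singleton_self (R := ℂ) v)
      · have h1 : Module.finrank ℂ (ℂ ∙ v) = 1 := finrank_span_singleton hv
        rw [h', finrank_top, hdim] at h1
        omega
    · exact h
  have hW : π w = (-1 : ℂ) • 1 := by rw [hl, hlneg]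
  -- the (anti)commutation dichotomy
  have hε : ∀ p g : Γ, π p * π g = π g * π p ∨ π p * π g = -(π g * π p) := by
    intro p g
    rcases hcomm p g with h | h
    · left; rw [hπmul p g, h, map_one, one_mul]
    · right; rw [hπmul p g, h, hW]; simp
  -- non-central elements have non-scalar image
  have hnonscalar : ∀ z : Γ, z ∉ Subgroup.center Γ → ¬∃ μ : ℂ, π z = μ • 1 := by
    rintro z hz ⟨μ, hμ⟩
    rw [Subgroup.mem_center_iff] at hz
    push_neg at hz
    obtain ⟨g, hg⟩ := hz
    have hzg : ⁅z, g⁆ = w := by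
      rcases hcomm z g with h | h
      · exact absurd (commutatorElement_eq_one_iff_mul_comm.mp h).symm hg
      · exact h
    have hanti : π z * π g = -(π g * π z) := by
      rw [hπmul z g, hzg, hW]; simp
    rw [hμ] at hanti
    have h0 : (2 * μ) • π g = 0 := by
      have heq : μ • π g = -(μ • π g) := by
        calc μ • π g = (μ • 1) * π g := by simp
          _ = -(π g * (μ • 1)) := hanti
          _ = -(μ • π g) := by simp [mul_smul_comm]
      rw [two_mul, add_smul]
      exact add_eq_zero_iff_eq_neg.mpr heq
    rcases smul_eq_zero.mp h0 with h | h
    · have hμ0 : μ = 0 := by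
        rcases mul_eq_zero.mp h with h' | h'
        · norm_num at h'
        · exact h'
      exact hπne z (by rw [hμ, hμ0, zero_smul])
    · exact hπne g h
  -- squares of images are scalar
  have hsq : ∀ z : Γ, ∃ α : ℂ, π z * π z = α • 1 := by
    intro z
    apply schur
    intro g
    rcases hε z g with h | h
    · rw [mul_assoc, h, ← mul_assoc, h, mul_assoc]
    · rw [mul_assoc, h, mul_neg, ← mul_assoc, h, neg_mul, neg_neg, mul_assoc]
  obtain ⟨α, hα⟩ := hsq x
  obtain ⟨β, hβ⟩ := hsq c
  set P := π x with hPdef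
  set Q := π c with hQdef
  have hPQ : Q * P = P * Q := by rw [← map_mul, ← map_mul, hcx]
  have hxns := hnonscalar x hx
  have hcns := hnonscalar c hc
  -- find v with v, P v independent
  obtain ⟨v, hv⟩ : ∃ v : H, LinearIndependent ℂ ![v, P v] := by
    by_contra hcon
    push_neg at hcon
    apply hxns
    have key : ∀ u : H, ∃ a : ℂ, P u = a • u := by
      intro u
      by_cases hu0 : u = 0
      · exact ⟨0, by simp [hu0]⟩
      · have hni := hcon u
        rw [linearIndependent_fin2] at hni
        push_neg at hni
        simp only [Matrix.cons_val_one, Matrix.head_cons, Matrix.cons_val_zero] at hni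
        rcases eq_or_ne (P u) 0 with h | h
        · exact ⟨0, by simp [h]⟩
        · obtain ⟨a, ha⟩ := hni h
          have ha0 : a ≠ 0 := by rintro rfl; rw [zero_smul] at ha; exact hu0 ha.symm
          exact ⟨a⁻¹, by
            simpa [smul_smul, inv_mul_cancel₀ ha0] using congrArg (fun y => a⁻¹ • y) ha⟩
    obtain ⟨u, hu0⟩ := exists_ne (0 : H)
    obtain ⟨a, hau⟩ := key u
    refine ⟨a, LinearMap.ext fun z => ?_⟩
    simp only [LinearMap.smul_apply, Module.End.one_apply]
    obtain ⟨b, hbz⟩ := key z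
    by_cases hind : LinearIndependent ℂ ![u, z]
    · obtain ⟨d, hd⟩ := key (u + z)
      have hexp : (a - d) • u + (b - d) • z = 0 := by
        have h1 : a • u + b • z = d • u + d • z := by
          rw [← hau, ← hbz, ← map_add, hd, smul_add]
        calc (a - d) • u + (b - d) • z
            = (a • u + b • z) - (d • u + d • z) := by
              rw [sub_smul, sub_smul]; abel
          _ = 0 := by rw [h1]; abel
      obtain ⟨h1, h2⟩ := (LinearIndependent.pair_iff.mp hind) _ _ hexp
      have hbd : b = d := sub_eq_zero.mp h2
      have had : a = d := sub_eq_zero.mp h1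
      rw [hbz, hbd, ← had]
    · rw [linearIndependent_fin2] at hind
      push_neg at hind
      simp only [Matrix.cons_val_one, Matrix.head_cons, Matrix.cons_val_zero] at hind
      rcases eq_or_ne z 0 with h | h
      · rw [h]; simp
      · obtain ⟨t, ht⟩ := hind h
        have ht0 : t ≠ 0 := by rintro rfl; rw [zero_smul] at ht; exact hu0 ht.symm
        have hzu : z = t⁻¹ • u := by rw [← ht, smul_smul, inv_mul_cancel₀ ht0, one_smul]
        rw [hzu, map_smul, hau, smul_smul, smul_smul, mul_comm]
  -- build the basis {v, P v}
  have hcard : Fintype.card (Fin 2) = Module.finrank ℂ H := by simp [hdim]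
  let B : Module.Basis (Fin 2) ℂ H := basisOfLinearIndependentOfCardEqFinrank hv hcard
  have hB0 : B 0 = v := by
    simp [B, coe_basisOfLinearIndependentOfCardEqFinrank]
  have hB1 : B 1 = P v := by
    simp [B, coe_basisOfLinearIndependentOfCardEqFinrank]
  set a₀ := B.repr (Q v) 0 with ha₀
  set b₀ := B.repr (Q v) 1 with hb₀
  have hQv : Q v = a₀ • v + b₀ • P v := by
    have := B.sum_repr (Q v)
    rw [Fin.sum_univ_two, hB0, hB1] at this
    exact this.symm
  have hQform : Q = a₀ • 1 + b₀ • P := by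
    refine B.ext (Fin.forall_fin_two.mpr ⟨?_, ?_⟩)
    · simpa [hB0] using hQv
    · rw [hB1]
      have h1 : Q (P v) = P (Q v) := by
        have := LinearMap.congr_fun hPQ v
        simpa using this
      rw [h1, hQv]
      simp [map_add, map_smul]
  -- expand Q² = β • 1
  have hsum : (a₀ * a₀ + b₀ * b₀ * α) • (1 : H →ₗ[ℂ] H) + (2 * (a₀ * b₀)) • P = β • 1 := by
    have hexpand : Q * Q = (a₀ * a₀) • (1 : H →ₗ[ℂ] H) + (2 * (a₀ * b₀)) • P
        + (b₀ * b₀) • (P * P) := by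
      rw [hQform]
      noncomm_ring
      simp only [zsmul_eq_mul, Int.cast_ofNat]
      module
    rw [← hβ, hexpand, hα, smul_smul]
    module
  have hPscal : (2 * (a₀ * b₀)) • P = (β - (a₀ * a₀ + b₀ * b₀ * α)) • (1 : H →ₗ[ℂ] H) := by
    rw [sub_smul, ← hsum]
    abel
  by_cases ha : a₀ = 0
  · exact ⟨b₀, by rw [hQform, ha, zero_smul, zero_add]⟩
  · exfalso
    by_cases hb : b₀ = 0
    · exact hcns ⟨a₀, by rw [← hQdef, hQform, hb, zero_smul, add_zero]⟩
    · apply hxns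
      have h20 : (2 * (a₀ * b₀)) ≠ 0 := by
        simp [ha, hb]
      refine ⟨(2 * (a₀ * b₀))⁻¹ * (β - (a₀ * a₀ + b₀ * b₀ * α)), ?_⟩
      rw [← hPdef, mul_smul, ← hPscal, smul_smul, inv_mul_cancel₀ h20, one_smul]
end

section
/- Let Γ be a group whose commutator set comm(Γ) has exactly two elements. Let π be an irreducible unitary representation of Γ on a 2-dimensional complex inner product space H, let x be an element of Γ not lying in the center Z(Γ), and let a, b be elements of Γ neither of which commutes with x (i.e. a ∉ Z_Γ(x) and b ∉ Z_Γ(x)). Then π(a⁻¹b) commutes with π(x). -/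
open scoped commutatorElement

/-- If the commutator set of `Γ` has exactly two elements, `π` is an irreducible unitary
representation of `Γ` on a 2-dimensional complex inner product space, `x ∉ Z(Γ)`, and `a, b`
are elements of `Γ` neither of which commutes with `x`, then `π (a⁻¹ * b)` commutes
with `π x`. -/
theorem commute_of_not_mem_centralizer {Γ : Type*} [Group Γ]
    (h2 : {w : Γ | ∃ x y : Γ, ⁅x, y⁆ = w}.encard = 2)
    {H : Type*} [NormedAddCommGroup H] [InnerProductSpace ℂ H] [FiniteDimensional ℂ H]
    (π : Γ →* (H →ₗ[ℂ] H))
    (hu : ∀ g : Γ, ∀ v w : H, (inner ℂ (π g v) (π g w) : ℂ) = inner ℂ v w)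
    (hirr : ∀ U : Submodule ℂ H, (∀ g : Γ, ∀ v ∈ U, π g v ∈ U) → U = ⊥ ∨ U = ⊤)
    (hdim : Module.finrank ℂ H = 2)
    (x : Γ) (hx : x ∉ Subgroup.center Γ)
    (a b : Γ) (ha : a * x ≠ x * a) (hb : b * x ≠ x * b) :
    Commute (π (a⁻¹ * b)) (π x) := by
  obtain ⟨u, v, huv, hS⟩ := Set.encard_eq_two.mp h2
  have h1 : (1:Γ) ∈ {w : Γ | ∃ x y : Γ, ⁅x, y⁆ = w} := ⟨1, 1, by simp⟩
  have haS : ⁅a, x⁆ ∈ {w : Γ | ∃ x y : Γ, ⁅x, y⁆ = w} := ⟨a, x, rfl⟩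
  have hbS : ⁅b, x⁆ ∈ {w : Γ | ∃ x y : Γ, ⁅x, y⁆ = w} := ⟨b, x, rfl⟩
  have hane : ⁅a, x⁆ ≠ 1 := by
    simpa [commutatorElement_eq_one_iff_mul_comm] using ha
  have hbne : ⁅b, x⁆ ≠ 1 := by
    simpa [commutatorElement_eq_one_iff_mul_comm] using hb
  rw [hS] at h1 haS hbS
  have key : ⁅a, x⁆ = ⁅b, x⁆ := by
    rcases h1 with h1 | h1 <;> rcases haS with h3 | h3 <;> rcases hbS with h4 | h4 <;>
      simp_all
  have key2 : a * x * a⁻¹ = b * x * b⁻¹ := by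
    have : a * x * a⁻¹ * x⁻¹ = b * x * b⁻¹ * x⁻¹ := key
    exact mul_right_cancel this
  have hcomm : (a⁻¹ * b) * x = x * (a⁻¹ * b) := by
    have : a⁻¹ * (a * x * a⁻¹) * b = a⁻¹ * (b * x * b⁻¹) * b := by rw [key2]
    calc (a⁻¹ * b) * x = a⁻¹ * (b * x * b⁻¹) * b := by group
    _ = a⁻¹ * (a * x * a⁻¹) * b := this.symm
    _ = x * (a⁻¹ * b) := by group
  have := congrArg π hcomm
  simpa [map_mul, Commute, SemiconjBy] using this
end

section
/- Let Γ be a group such that the commutator set comm(Γ) has exactly two elements and such that the irreducible unitary representations of Γ of dimension at most 2 separate the points of Γ, i.e. for all x ≠ y in Γ there exist n ∈ {1, 2} and an irreducible unitary representation π of Γ on ℂⁿ with π(x) ≠ π(y). Then the center Z(Γ) has index exactly 4 in Γ. -/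
open scoped commutatorElement

private lemma matrix_eq_of_mulVec {n : ℕ} {M N : Matrix (Fin n) (Fin n) ℂ}
    (h : ∀ v, M.mulVec v = N.mulVec v) : M = N :=
  Matrix.toLin'.injective (LinearMap.ext fun v => by
    simp only [Matrix.toLin'_apply, h v])

private lemma eq_smul_one_of_eigen_top {M : Matrix (Fin 2) (Fin 2) ℂ} {μ : ℂ}
    (h : Module.End.eigenspace (Matrix.mulVecLin M) μ = ⊤) : M = μ • 1 := by
  apply matrix_eq_of_mulVec
  intro v
  have hv : v ∈ Module.End.eigenspace (Matrix.mulVecLin M) μ := h ▸ Submodule.mem_top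
  rw [Module.End.mem_eigenspace_iff, Matrix.mulVecLin_apply] at hv
  rw [hv, Matrix.smul_mulVec, Matrix.one_mulVec]

/-- If the commutator set of `Γ` has exactly two elements, and the irreducible unitary
representations of `Γ` of dimension at most 2 separate the points of `Γ`, then the centre of
`Γ` has index exactly 4. -/
theorem index_center_eq_four_of_separating {Γ : Type*} [Group Γ]
    (h2 : {w : Γ | ∃ x y : Γ, ⁅x, y⁆ = w}.encard = 2)
    (hsep : ∀ x y : Γ, x ≠ y → ∃ n : ℕ, (n = 1 ∨ n = 2) ∧
      ∃ π : Γ →* Matrix.unitaryGroup (Fin n) ℂ,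
        (∀ U : Submodule ℂ (Fin n → ℂ),
          (∀ g : Γ, ∀ v ∈ U, Matrix.mulVec (π g : Matrix (Fin n) (Fin n) ℂ) v ∈ U) →
            U = ⊥ ∨ U = ⊤) ∧
        π x ≠ π y) :
    (Subgroup.center Γ).index = 4 := by
  classical
  -- extract the non-trivial commutator value c
  obtain ⟨a, b, hab, hS⟩ := Set.encard_eq_two.mp h2
  have h1mem : (1 : Γ) ∈ {w : Γ | ∃ x y : Γ, ⁅x, y⁆ = w} := ⟨1, 1, by simp⟩
  obtain ⟨c, hc1, hmem, x₀, y₀, hx0y0⟩ :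
      ∃ c : Γ, c ≠ 1 ∧ (∀ x y : Γ, ⁅x, y⁆ = 1 ∨ ⁅x, y⁆ = c) ∧ ∃ x y : Γ, ⁅x, y⁆ = c := by
    rw [hS] at h1mem
    have hall : ∀ x y : Γ, ⁅x, y⁆ = a ∨ ⁅x, y⁆ = b := by
      intro x y
      have hx : ⁅x, y⁆ ∈ {w : Γ | ∃ u v : Γ, ⁅u, v⁆ = w} := ⟨x, y, rfl⟩
      rw [hS] at hx
      simpa using hx
    have h1ab : (1 : Γ) = a ∨ (1 : Γ) = b := by simpa using h1mem
    rcases h1ab with h1a | h1b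
    · refine ⟨b, ?_, ?_, ?_⟩
      · rw [h1a]; exact fun h => hab h.symm
      · intro x y; rcases hall x y with h | h
        · left; rw [h, ← h1a]
        · right; exact h
      · have hb : b ∈ ({a, b} : Set Γ) := by simp
        rw [← hS] at hb; exact hb
    · refine ⟨a, ?_, ?_, ?_⟩
      · rw [h1b]; exact hab
      · intro x y; rcases hall x y with h | h
        · right; exact h
        · left; rw [h, ← h1b]
      · have ha : a ∈ ({a, b} : Set Γ) := by simp
        rw [← hS] at ha; exact ha
  -- c is central
  have hcentral : ∀ g : Γ, g * c = c * g := by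
    intro g
    have hconj : g * c * g⁻¹ = ⁅g * x₀ * g⁻¹, g * y₀ * g⁻¹⁆ := by
      rw [← hx0y0]; simp only [commutatorElement_def]; group
    rcases hmem (g * x₀ * g⁻¹) (g * y₀ * g⁻¹) with h | h
    · exfalso; apply hc1
      have h' : g * c * g⁻¹ = 1 := hconj.trans h
      have h'' := congrArg (fun z => g⁻¹ * z * g) h'
      simpa [mul_assoc] using h''
    · have h' : g * c * g⁻¹ = c := hconj.trans h
      have h'' := congrArg (fun z => z * g) h'
      simpa [mul_assoc] using h''
  -- c * c = 1
  have hcc : c * c = 1 := by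
    have h1 : ⁅y₀, x₀⁆ = c⁻¹ := by rw [← commutatorElement_inv, hx0y0]
    rcases hmem y₀ x₀ with h | h
    · exfalso; apply hc1
      rw [h1] at h
      simpa using congrArg (·⁻¹) h
    · rw [h1] at h
      calc c * c = c * c⁻¹ := by rw [h]
        _ = 1 := by simp
  have hcinv : c⁻¹ = c := inv_eq_of_mul_eq_one_right hcc
  -- commutators are central
  have hcomm_central : ∀ x y g : Γ, g * ⁅x, y⁆ = ⁅x, y⁆ * g := by
    intro x y g
    rcases hmem x y with h | h <;> rw [h]
    · simp
    · exact (hcentral g).symm ▸ hcentral g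
  -- bilinearity in the first variable
  have hbil : ∀ u v x : Γ, ⁅u * v, x⁆ = ⁅u, x⁆ * ⁅v, x⁆ := by
    intro u v x
    calc ⁅u * v, x⁆ = u * ⁅v, x⁆ * u⁻¹ * ⁅u, x⁆ := by
          simp only [commutatorElement_def]; group
      _ = ⁅v, x⁆ * u * u⁻¹ * ⁅u, x⁆ := by rw [hcomm_central v x u]
      _ = ⁅v, x⁆ * ⁅u, x⁆ := by group
      _ = ⁅u, x⁆ * ⁅v, x⁆ := hcomm_central u x ⁅v, x⁆
  have hinvl : ∀ u x : Γ, ⁅u⁻¹, x⁆ = ⁅u, x⁆⁻¹ := by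
    intro u x
    have h := hbil u⁻¹ u x
    simp only [inv_mul_cancel] at h
    have h1 : (1 : Γ) = ⁅u⁻¹, x⁆ * ⁅u, x⁆ := by simpa using h
    exact eq_inv_of_mul_eq_one_left h1.symm
  have hyx : ⁅y₀, x₀⁆ = c := by
    rw [← commutatorElement_inv, hx0y0, hcinv]
  have hnotZ : ∀ z w : Γ, ⁅z, w⁆ = c → z ∉ Subgroup.center Γ := by
    intro z w h hz
    have h1 : ⁅z, w⁆ = 1 :=
      commutatorElement_eq_one_iff_mul_comm.mpr ((Subgroup.mem_center_iff.mp hz w).symm)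
    rw [h] at h1
    exact hc1 h1
  -- the separating representation at (c, 1)
  obtain ⟨n, hn, π, hirr, hne⟩ := hsep c 1 hc1
  -- key step: an element commuting with x₀ and y₀ is central
  have hkey : ∀ g : Γ, ⁅g, x₀⁆ = 1 → ⁅g, y₀⁆ = 1 → g ∈ Subgroup.center Γ := by
    rcases hn with rfl | rfl
    · -- n = 1 : impossible, since 1×1 matrices commute
      exfalso
      apply hne
      rw [map_one, ← hx0y0, map_commutatorElement]
      have hcm : ∀ P Q : Matrix.unitaryGroup (Fin 1) ℂ, P * Q = Q * P := by
        intro P Q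
        apply Subtype.ext
        have hM : ∀ X Y : Matrix (Fin 1) (Fin 1) ℂ, X * Y = Y * X := by
          intro X Y
          ext i j
          rw [Matrix.mul_apply, Matrix.mul_apply, Subsingleton.elim i 0, Subsingleton.elim j 0]
          simp [Fin.sum_univ_one, mul_comm]
        calc ((P * Q : Matrix.unitaryGroup (Fin 1) ℂ) : Matrix (Fin 1) (Fin 1) ℂ)
            = (P : Matrix (Fin 1) (Fin 1) ℂ) * Q := rfl
          _ = (Q : Matrix (Fin 1) (Fin 1) ℂ) * P := hM _ _
          _ = ((Q * P : Matrix.unitaryGroup (Fin 1) ℂ) : Matrix (Fin 1) (Fin 1) ℂ) := rfl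
      exact commutatorElement_eq_one_iff_mul_comm.mpr (hcm _ _)
    · -- n = 2
      set S : Matrix (Fin 2) (Fin 2) ℂ := ((π c : Matrix (Fin 2) (Fin 2) ℂ)) with hSdef
      set A : Matrix (Fin 2) (Fin 2) ℂ := ((π x₀ : Matrix (Fin 2) (Fin 2) ℂ)) with hAdef
      set B : Matrix (Fin 2) (Fin 2) ℂ := ((π y₀ : Matrix (Fin 2) (Fin 2) ℂ)) with hBdef
      have hcoe : ∀ u v : Γ, ((π (u * v) : Matrix (Fin 2) (Fin 2) ℂ))
          = (π u : Matrix (Fin 2) (Fin 2) ℂ) * (π v : Matrix (Fin 2) (Fin 2) ℂ) := by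
        intro u v
        rw [map_mul]
        rfl
      have hSS : S * S = 1 := by
        rw [hSdef, ← hcoe, hcc, map_one]
        rfl
      have hSne : S ≠ 1 := by
        intro h
        apply hne
        rw [map_one]
        exact Subtype.ext (by rw [← hSdef]; exact h)
      have hScomm : ∀ g : Γ, (π g : Matrix (Fin 2) (Fin 2) ℂ) * S = S * (π g : Matrix (Fin 2) (Fin 2) ℂ) := by
        intro g
        rw [hSdef, ← hcoe, ← hcoe, hcentral g]
      have hSBA : S * (B * A) = A * B := by
        have e1 : c * (y₀ * x₀) = x₀ * y₀ := by
          rw [← hx0y0]; simp only [commutatorElement_def]; group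
        have e2 := congrArg (fun z => (π z : Matrix (Fin 2) (Fin 2) ℂ)) e1
        simpa only [hcoe] using e2
      -- S is the scalar -1
      obtain ⟨μ, hμ⟩ := Module.End.exists_eigenvalue (Matrix.mulVecLin S)
      have hStop : Module.End.eigenspace (Matrix.mulVecLin S) μ = ⊤ := by
        have hinv : ∀ g : Γ, ∀ v ∈ Module.End.eigenspace (Matrix.mulVecLin S) μ,
            Matrix.mulVec (π g : Matrix (Fin 2) (Fin 2) ℂ) v ∈
              Module.End.eigenspace (Matrix.mulVecLin S) μ := by
          intro g v hv
          rw [Module.End.mem_eigenspace_iff, Matrix.mulVecLin_apply] at hv ⊢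
          rw [Matrix.mulVec_mulVec, ← hScomm g, ← Matrix.mulVec_mulVec, hv, Matrix.mulVec_smul]
        rcases hirr _ hinv with h | h
        · exact absurd h hμ
        · exact h
      have hSμ : S = μ • 1 := eq_smul_one_of_eigen_top hStop
      have hμμ : μ * μ = 1 := by
        have h := hSS
        rw [hSμ, smul_mul_smul_comm, one_mul] at h
        have h00 := congrFun (congrFun h 0) 0
        simpa using h00
      have hμne : μ ≠ 1 := by
        intro h
        apply hSne
        rw [hSμ, h, one_smul]
      have hμm1 : μ = -1 := by
        have hfac : (μ - 1) * (μ + 1) = 0 := by linear_combination hμμ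
        rcases mul_eq_zero.mp hfac with h | h
        · exact absurd (sub_eq_zero.mp h) hμne
        · exact eq_neg_of_add_eq_zero_left h
      have hABneg : A * B = -(B * A) := by
        rw [← hSBA, hSμ, hμm1, neg_smul, one_smul, neg_mul, one_mul]
      -- now the key property
      intro g hgx hgy
      set M : Matrix (Fin 2) (Fin 2) ℂ := ((π g : Matrix (Fin 2) (Fin 2) ℂ)) with hMdef
      have hMA : M * A = A * M := by
        rw [hMdef, hAdef, ← hcoe, ← hcoe, commutatorElement_eq_one_iff_mul_comm.mp hgx]
      have hMB : M * B = B * M := by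
        rw [hMdef, hBdef, ← hcoe, ← hcoe, commutatorElement_eq_one_iff_mul_comm.mp hgy]
      -- M is scalar
      obtain ⟨ν, hν⟩ := Module.End.exists_eigenvalue (Matrix.mulVecLin M)
      set K := Module.End.eigenspace (Matrix.mulVecLin M) ν with hKdef
      have hKtop : K = ⊤ := by
        by_contra hK
        obtain ⟨v, hvK, hv0⟩ := (Submodule.ne_bot_iff K).mp hν
        have hfr : Module.finrank ℂ K ≤ 1 := by
          have h1 : Module.finrank ℂ K < Module.finrank ℂ (Fin 2 → ℂ) :=
            Submodule.finrank_lt hK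
          rw [Module.finrank_fin_fun] at h1
          omega
        have hspan : (Submodule.span ℂ {v} : Submodule ℂ (Fin 2 → ℂ)) = K := by
          apply Submodule.eq_of_le_of_finrank_le
          · rw [Submodule.span_le, Set.singleton_subset_iff]; exact hvK
          · rw [finrank_span_singleton hv0]; exact hfr
        -- invariance of K under A and B
        have hinvK : ∀ X : Matrix (Fin 2) (Fin 2) ℂ, M * X = X * M → X.mulVec v ∈ K := by
          intro X hX
          rw [hKdef, Module.End.mem_eigenspace_iff, Matrix.mulVecLin_apply]
          rw [Module.End.mem_eigenspace_iff, Matrix.mulVecLin_apply] at hvK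
          rw [Matrix.mulVec_mulVec, hX, ← Matrix.mulVec_mulVec, hvK, Matrix.mulVec_smul]
        obtain ⟨α, hα⟩ := Submodule.mem_span_singleton.mp (hspan ▸ hinvK A hMA)
        obtain ⟨β, hβ⟩ := Submodule.mem_span_singleton.mp (hspan ▸ hinvK B hMB)
        have hab0 : (α * β) • v = -((α * β) • v) := by
          have h1 : (A * B).mulVec v = (α * β) • v := by
            rw [← Matrix.mulVec_mulVec, ← hβ, Matrix.mulVec_smul, ← hα, smul_smul, mul_comm β α]
          have h2 : (B * A).mulVec v = (α * β) • v := by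
            rw [← Matrix.mulVec_mulVec, ← hα, Matrix.mulVec_smul, ← hβ, smul_smul]
          calc (α * β) • v = (A * B).mulVec v := h1.symm
            _ = (-(B * A)).mulVec v := by rw [hABneg]
            _ = -((B * A).mulVec v) := by rw [Matrix.neg_mulVec]
            _ = -((α * β) • v) := by rw [h2]
        have habz : (α * β) = 0 := by
          have h4 : (2 : ℂ) • ((α * β) • v) = 0 := by
            rw [two_smul]
            nth_rewrite 1 [hab0]
            simp
          rcases smul_eq_zero.mp h4 with h | h
          · norm_num at h
          · rcases smul_eq_zero.mp h with h' | h'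
            · exact h'
            · exact absurd h' hv0
        -- α = 0 or β = 0 contradicts unitarity
        have haz : ∀ (X : Matrix (Fin 2) (Fin 2) ℂ), star X * X = 1 → X.mulVec v = 0 → False := by
          intro X hX h0
          apply hv0
          have : (star X * X).mulVec v = v := by rw [hX, Matrix.one_mulVec]
          rw [← Matrix.mulVec_mulVec, h0, Matrix.mulVec_zero] at this
          exact this.symm
        rcases mul_eq_zero.mp habz with h | h
        · exact haz A (π x₀).2.1 (by rw [← hα, h, zero_smul])
        · exact haz B (π y₀).2.1 (by rw [← hβ, h, zero_smul])
      have hMν : M = ν • 1 := eq_smul_one_of_eigen_top (hKdef ▸ hKtop)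
      have hνne : ν ≠ 0 := by
        intro h
        have h1 : M = 0 := by rw [hMν, h, zero_smul]
        have h2 : star M * M = 1 := (π g).2.1
        rw [h1, mul_zero] at h2
        have h00 := congrFun (congrFun h2 0) 0
        simp [Matrix.one_apply] at h00
      -- conclude g central
      rw [Subgroup.mem_center_iff]
      intro w
      rcases hmem g w with h | h
      · exact (commutatorElement_eq_one_iff_mul_comm.mp h).symm
      · exfalso
        set W : Matrix (Fin 2) (Fin 2) ℂ := ((π w : Matrix (Fin 2) (Fin 2) ℂ)) with hWdef
        have e1 : c * (w * g) = g * w := by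
          rw [← h]; simp only [commutatorElement_def]; group
        have e2 : S * (W * M) = M * W := by
          have := congrArg (fun z => (π z : Matrix (Fin 2) (Fin 2) ℂ)) e1
          simpa only [hcoe] using this
        rw [hMν, hSμ, hμm1] at e2
        have e3 : -(ν • W) = ν • W := by
          have l : ((-1 : ℂ) • (1 : Matrix (Fin 2) (Fin 2) ℂ)) * (W * (ν • 1)) = -(ν • W) := by
            rw [smul_mul_assoc, one_mul, mul_smul_comm, mul_one, neg_one_smul]
          have r : (ν • (1 : Matrix (Fin 2) (Fin 2) ℂ)) * W = ν • W := by
            rw [smul_mul_assoc, one_mul]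
          rw [l, r] at e2
          exact e2
        have hW0 : W = 0 := by
          have h4 : (2 : ℂ) • (ν • W) = 0 := by
            rw [two_smul]
            nth_rewrite 1 [← e3]
            simp
          rcases smul_eq_zero.mp h4 with h' | h'
          · norm_num at h'
          · rcases smul_eq_zero.mp h' with h'' | h''
            · exact absurd h'' hνne
            · exact h''
        have h2 : star W * W = 1 := (π w).2.1
        rw [hW0, mul_zero] at h2
        have h00 := congrFun (congrFun h2 0) 0
        simp [Matrix.one_apply] at h00
  -- Now count the cosets of the centre
  have hnotZ1 : x₀ ∉ Subgroup.center Γ := hnotZ x₀ y₀ hx0y0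
  have hnotZ2 : y₀ ∉ Subgroup.center Γ := hnotZ y₀ x₀ hyx
  have hnotZ3 : x₀ * y₀ ∉ Subgroup.center Γ := by
    apply hnotZ (x₀ * y₀) x₀
    rw [hbil, commutatorElement_self, one_mul, hyx]
  have hnotZ4 : x₀⁻¹ * y₀ ∉ Subgroup.center Γ := by
    apply hnotZ (x₀⁻¹ * y₀) x₀
    rw [hbil, hinvl, commutatorElement_self, inv_one, one_mul, hyx]
  have hnotZ5 : y₀⁻¹ * (x₀ * y₀) ∉ Subgroup.center Γ := by
    apply hnotZ (y₀⁻¹ * (x₀ * y₀)) y₀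
    rw [hbil, hinvl, commutatorElement_self, inv_one, one_mul, hbil, hx0y0,
      commutatorElement_self, mul_one]
  have hnotZ6 : x₀⁻¹ * (x₀ * y₀) ∉ Subgroup.center Γ := by
    rw [inv_mul_cancel_left]
    exact hnotZ2
  -- universal set of the quotient
  have hU : (Set.univ : Set (Γ ⧸ Subgroup.center Γ)) =
      {(1 : Γ ⧸ Subgroup.center Γ), ((x₀ : Γ ⧸ Subgroup.center Γ)),
        ((y₀ : Γ ⧸ Subgroup.center Γ)), ((x₀ * y₀ : Γ) : Γ ⧸ Subgroup.center Γ)} := by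
    ext q
    simp only [Set.mem_univ, true_iff, Set.mem_insert_iff, Set.mem_singleton_iff]
    induction q using QuotientGroup.induction_on with
    | H g =>
      rcases hmem g x₀ with hgx | hgx <;> rcases hmem g y₀ with hgy | hgy
      · left
        rw [QuotientGroup.eq_one_iff]
        exact hkey g hgx hgy
      · right; left
        rw [eq_comm, QuotientGroup.eq]
        apply hkey
        · rw [hbil, hinvl, commutatorElement_self, inv_one, one_mul, hgx]
        · rw [hbil, hinvl, hx0y0, hcinv, hgy, hcc]
      · right; right; left
        rw [eq_comm, QuotientGroup.eq]
        apply hkey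
        · rw [hbil, hinvl, hyx, hcinv, hgx, hcc]
        · rw [hbil, hinvl, commutatorElement_self, inv_one, one_mul, hgy]
      · right; right; right
        rw [eq_comm, QuotientGroup.eq]
        apply hkey
        · rw [mul_inv_rev, mul_assoc, hbil, hbil, hinvl, hinvl, hyx, hcinv,
            commutatorElement_self, inv_one, one_mul, hgx, hcc]
        · rw [mul_inv_rev, mul_assoc, hbil, hbil, hinvl, hinvl, commutatorElement_self,
            inv_one, one_mul, hx0y0, hcinv, hgy, hcc]
  -- distinctness of the four cosets
  have hne1x : (1 : Γ ⧸ Subgroup.center Γ) ≠ ((x₀ : Γ ⧸ Subgroup.center Γ)) := by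
    intro h
    rw [eq_comm, QuotientGroup.eq_one_iff] at h
    exact hnotZ1 h
  have hne1y : (1 : Γ ⧸ Subgroup.center Γ) ≠ ((y₀ : Γ ⧸ Subgroup.center Γ)) := by
    intro h
    rw [eq_comm, QuotientGroup.eq_one_iff] at h
    exact hnotZ2 h
  have hne1xy : (1 : Γ ⧸ Subgroup.center Γ) ≠ (((x₀ * y₀ : Γ) : Γ ⧸ Subgroup.center Γ)) := by
    intro h
    rw [eq_comm, QuotientGroup.eq_one_iff] at h
    exact hnotZ3 h
  have hnexy : ((x₀ : Γ ⧸ Subgroup.center Γ)) ≠ ((y₀ : Γ ⧸ Subgroup.center Γ)) := by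
    intro h
    rw [QuotientGroup.eq] at h
    exact hnotZ4 h
  have hnexxy : ((x₀ : Γ ⧸ Subgroup.center Γ)) ≠ (((x₀ * y₀ : Γ) : Γ ⧸ Subgroup.center Γ)) := by
    intro h
    rw [QuotientGroup.eq] at h
    exact hnotZ6 h
  have hneyxy : ((y₀ : Γ ⧸ Subgroup.center Γ)) ≠ (((x₀ * y₀ : Γ) : Γ ⧸ Subgroup.center Γ)) := by
    intro h
    rw [QuotientGroup.eq] at h
    exact hnotZ5 h
  -- compute the cardinality
  have hnm1 : (1 : Γ ⧸ Subgroup.center Γ) ∉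
      ({((x₀ : Γ ⧸ Subgroup.center Γ)), ((y₀ : Γ ⧸ Subgroup.center Γ)),
        ((x₀ * y₀ : Γ) : Γ ⧸ Subgroup.center Γ)} : Set (Γ ⧸ Subgroup.center Γ)) := by
    simp only [Set.mem_insert_iff, Set.mem_singleton_iff]
    push_neg
    exact ⟨hne1x, hne1y, hne1xy⟩
  have hnm2 : ((x₀ : Γ ⧸ Subgroup.center Γ)) ∉
      ({((y₀ : Γ ⧸ Subgroup.center Γ)),
        ((x₀ * y₀ : Γ) : Γ ⧸ Subgroup.center Γ)} : Set (Γ ⧸ Subgroup.center Γ)) := by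
    simp only [Set.mem_insert_iff, Set.mem_singleton_iff]
    push_neg
    exact ⟨hnexy, hnexxy⟩
  rw [Subgroup.index_eq_card, ← Set.ncard_univ, hU]
  rw [Set.ncard_insert_of_notMem hnm1 (Set.toFinite _)]
  rw [Set.ncard_insert_of_notMem hnm2 (Set.toFinite _)]
  rw [Set.ncard_pair hneyxy]
end

section
/- Let A and B be C*-algebras (over ℂ). Let ι be an index set with a nontrivial filter l on it, let (f_i)_{i∈ι} and (g_i)_{i∈ι} be families of states on A and B respectively, and let f and g be states on A and B respectively. If for every a ∈ A and every b ∈ B the products f_i(a)·g_i(b) converge along l to f(a)·g(b), then for every a ∈ A the values f_i(a) converge along l to f(a), and for every b ∈ B the values g_i(b) converge along l to g(b). -/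
open Filter Topology

lemma aux_exists_pos {A : Type*}
    [NormedRing A] [StarRing A] [CStarRing A] [NormedAlgebra ℂ A] [CompleteSpace A]
    [StarModule ℂ A] (f : A →L[ℂ] ℂ) (hfnorm : ‖f‖ = 1)
    (hfpos : ∀ a : A, ∃ r : ℝ, 0 ≤ r ∧ f (star a * a) = (r : ℂ)) :
    ∃ (a : A) (r : ℝ), 0 < r ∧ f (star a * a) = (r : ℂ) := by
  by_contra hc
  push_neg at hc
  have hzero : ∀ a : A, f (star a * a) = 0 := by
    intro a
    obtain ⟨r, hr0, hr⟩ := hfpos a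
    rcases hr0.lt_or_eq with h' | h'
    · exact absurd hr (hc a r h')
    · rw [hr, ← h', Complex.ofReal_zero]
  letI : CStarAlgebra A := { }
  letI := CStarAlgebra.spectralOrder A
  haveI := CStarAlgebra.spectralOrderedRing A
  have hnn : ∀ x : A, 0 ≤ x → f x = 0 := by
    intro x hx
    have h := hzero (CFC.sqrt x)
    rwa [(IsSelfAdjoint.of_nonneg (CFC.sqrt_nonneg x)).star_eq,
      CFC.sqrt_mul_sqrt_self x hx] at h
  have hsa : ∀ x : A, IsSelfAdjoint x → f x = 0 := by
    intro x hx
    rw [← CFC.posPart_sub_negPart x hx, map_sub, hnn _ (CFC.posPart_nonneg x),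
      hnn _ (CFC.negPart_nonneg x), sub_zero]
  have hall : ∀ x : A, f x = 0 := by
    intro x
    conv_lhs => rw [← realPart_add_I_smul_imaginaryPart x]
    rw [map_add, map_smul, hsa _ (realPart x).2, hsa _ (imaginaryPart x).2]
    simp
  have hf0 : f = 0 := by ext x; exact hall x
  rw [hf0] at hfnorm
  simp at hfnorm

lemma aux_tendsto {A B : Type*}
    [NormedRing A] [StarRing A] [CStarRing A] [NormedAlgebra ℂ A] [CompleteSpace A]
    [StarModule ℂ A]
    [NormedRing B] [StarRing B] [CStarRing B] [NormedAlgebra ℂ B] [CompleteSpace B]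
    [StarModule ℂ B]
    {ι : Type*} (l : Filter ι) [l.NeBot]
    (F : ι → (A →L[ℂ] ℂ)) (G : ι → (B →L[ℂ] ℂ)) (f : A →L[ℂ] ℂ) (g : B →L[ℂ] ℂ)
    (hFnorm : ∀ i, ‖F i‖ = 1)
    (hFpos : ∀ i, ∀ a : A, ∃ r : ℝ, 0 ≤ r ∧ F i (star a * a) = (r : ℂ))
    (hGnorm : ∀ i, ‖G i‖ = 1)
    (hGpos : ∀ i, ∀ b : B, ∃ r : ℝ, 0 ≤ r ∧ G i (star b * b) = (r : ℂ))
    (hfnorm : ‖f‖ = 1)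
    (hfpos : ∀ a : A, ∃ r : ℝ, 0 ≤ r ∧ f (star a * a) = (r : ℂ))
    (hgnorm : ‖g‖ = 1)
    (hgpos : ∀ b : B, ∃ r : ℝ, 0 ≤ r ∧ g (star b * b) = (r : ℂ))
    (h : ∀ (a : A) (b : B),
      Tendsto (fun i => F i a * G i b) l (𝓝 (f a * g b))) :
    ∀ a : A, Tendsto (fun i => F i a) l (𝓝 (f a)) := by
  obtain ⟨a₀, r, hr, hfc⟩ := aux_exists_pos f hfnorm hfpos
  obtain ⟨b₀, s, hs, hgd⟩ := aux_exists_pos g hgnorm hgpos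
  set c : A := star a₀ * a₀ with hc_def
  set d : B := star b₀ * b₀ with hd_def
  intro a
  rw [Filter.tendsto_iff_ultrafilter]
  intro U hU
  -- existence of ultrafilter limits
  have hΦex : ∀ x : A, ∃ z : ℂ, Tendsto (fun i => F i x) (↑U) (𝓝 z) := by
    intro x
    have hb : ∀ i, F i x ∈ Metric.closedBall (0 : ℂ) ‖x‖ := by
      intro i
      rw [Metric.mem_closedBall, dist_zero_right]
      calc ‖F i x‖ ≤ ‖F i‖ * ‖x‖ := (F i).le_opNorm x
        _ = ‖x‖ := by rw [hFnorm i, one_mul]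
    obtain ⟨z, -, hz⟩ := (isCompact_closedBall (0 : ℂ) ‖x‖).ultrafilter_le_nhds
      (U.map (fun i => F i x))
      (by
        rw [Ultrafilter.coe_map, le_principal_iff, mem_map]
        exact Filter.Eventually.of_forall hb)
    exact ⟨z, hz⟩
  have hΨex : ∀ y : B, ∃ z : ℂ, Tendsto (fun i => G i y) (↑U) (𝓝 z) := by
    intro y
    have hb : ∀ i, G i y ∈ Metric.closedBall (0 : ℂ) ‖y‖ := by
      intro i
      rw [Metric.mem_closedBall, dist_zero_right]
      calc ‖G i y‖ ≤ ‖G i‖ * ‖y‖ := (G i).le_opNorm y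
        _ = ‖y‖ := by rw [hGnorm i, one_mul]
    obtain ⟨z, -, hz⟩ := (isCompact_closedBall (0 : ℂ) ‖y‖).ultrafilter_le_nhds
      (U.map (fun i => G i y))
      (by
        rw [Ultrafilter.coe_map, le_principal_iff, mem_map]
        exact Filter.Eventually.of_forall hb)
    exact ⟨z, hz⟩
  choose Φ hΦ using hΦex
  choose Ψ hΨ using hΨex
  have hπ : ∀ (x : A) (y : B), Φ x * Ψ y = f x * g y := fun x y =>
    tendsto_nhds_unique ((hΦ x).mul (hΨ y)) ((h x y).mono_left hU)
  have hrs : (r : ℂ) * (s : ℂ) ≠ 0 :=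
    mul_ne_zero (Complex.ofReal_ne_zero.mpr hr.ne') (Complex.ofReal_ne_zero.mpr hs.ne')
  have hcd : Φ c * Ψ d = (r : ℂ) * (s : ℂ) := by rw [hπ c d, hfc, hgd]
  have hΨd : Ψ d ≠ 0 := by
    intro h0
    rw [h0, mul_zero] at hcd
    exact hrs hcd.symm
  have hΦc : Φ c ≠ 0 := by
    intro h0
    rw [h0, zero_mul] at hcd
    exact hrs hcd.symm
  set t : ℂ := (s : ℂ) / Ψ d with ht_def
  set u : ℂ := (r : ℂ) / Φ c with hu_def
  have hΦeq : ∀ x : A, Φ x = f x * t := by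
    intro x
    calc Φ x = Φ x * Ψ d / Ψ d := (mul_div_cancel_right₀ _ hΨd).symm
      _ = f x * (s : ℂ) / Ψ d := by rw [hπ x d, hgd]
      _ = f x * t := by rw [ht_def, mul_div_assoc]
  have hΨeq : ∀ y : B, Ψ y = g y * u := by
    intro y
    calc Ψ y = Φ c * Ψ y / Φ c := by rw [mul_comm, mul_div_cancel_right₀ _ hΦc]
      _ = (r : ℂ) * g y / Φ c := by rw [hπ c y, hfc]
      _ = g y * u := by rw [hu_def, mul_comm (r : ℂ), mul_div_assoc]
  -- Φ c is a nonneg real, hence t is a nonneg real; similarly u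
  have hSclosed : IsClosed {z : ℂ | z.im = 0 ∧ 0 ≤ z.re} :=
    (isClosed_eq Complex.continuous_im continuous_const).inter
      (isClosed_le continuous_const Complex.continuous_re)
  have hΦcS : (Φ c).im = 0 ∧ 0 ≤ (Φ c).re := by
    refine hSclosed.mem_of_tendsto (hΦ c) (Filter.Eventually.of_forall fun i => ?_)
    obtain ⟨r', hr', heq⟩ := hFpos i a₀
    rw [← hc_def] at heq
    rw [heq]
    exact ⟨Complex.ofReal_im r', by simpa using hr'⟩
  have hΨdS : (Ψ d).im = 0 ∧ 0 ≤ (Ψ d).re := by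
    refine hSclosed.mem_of_tendsto (hΨ d) (Filter.Eventually.of_forall fun i => ?_)
    obtain ⟨r', hr', heq⟩ := hGpos i b₀
    rw [← hd_def] at heq
    rw [heq]
    exact ⟨Complex.ofReal_im r', by simpa using hr'⟩
  have hΦc_real : Φ c = ((Φ c).re : ℂ) := by
    apply Complex.ext <;> simp [hΦcS.1]
  have hΨd_real : Ψ d = ((Ψ d).re : ℂ) := by
    apply Complex.ext <;> simp [hΨdS.1]
  set t' : ℝ := s / (Ψ d).re with ht'_def
  set u' : ℝ := r / (Φ c).re with hu'_def
  have ht : t = (t' : ℂ) := by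
    rw [ht_def, ht'_def, Complex.ofReal_div, ← hΨd_real]
  have hu : u = (u' : ℂ) := by
    rw [hu_def, hu'_def, Complex.ofReal_div, ← hΦc_real]
  have ht'0 : 0 ≤ t' := div_nonneg hs.le hΨdS.2
  have hu'0 : 0 ≤ u' := div_nonneg hr.le hΦcS.2
  -- t * u = 1
  have htu_c : t * u = 1 := by
    have e1 := hΦeq c
    rw [hfc] at e1
    have e2 := hΨeq d
    rw [hgd] at e2
    have h2 : ((r : ℂ) * t) * ((s : ℂ) * u) = (r : ℂ) * (s : ℂ) := by
      rw [← e1, ← e2]; exact hcd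
    have h1 : ((r : ℂ) * (s : ℂ)) * (t * u) = ((r : ℂ) * (s : ℂ)) * 1 := by
      linear_combination h2
    exact mul_left_cancel₀ hrs h1
  have htu : t' * u' = 1 := by
    rw [ht, hu, ← Complex.ofReal_mul, ← Complex.ofReal_one] at htu_c
    exact_mod_cast htu_c
  -- t' ≤ 1 and u' ≤ 1
  have hΦnorm : ∀ x : A, ‖Φ x‖ ≤ ‖x‖ := by
    intro x
    refine le_of_tendsto (hΦ x).norm (Filter.Eventually.of_forall fun i => ?_)
    calc ‖F i x‖ ≤ ‖F i‖ * ‖x‖ := (F i).le_opNorm x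
      _ = ‖x‖ := by rw [hFnorm i, one_mul]
  have hΨnorm : ∀ y : B, ‖Ψ y‖ ≤ ‖y‖ := by
    intro y
    refine le_of_tendsto (hΨ y).norm (Filter.Eventually.of_forall fun i => ?_)
    calc ‖G i y‖ ≤ ‖G i‖ * ‖y‖ := (G i).le_opNorm y
      _ = ‖y‖ := by rw [hGnorm i, one_mul]
  have ht'le : t' ≤ 1 := by
    rcases ht'0.lt_or_eq with hpos | hzero
    · have hb : ∀ x : A, ‖f x‖ ≤ (1 / t') * ‖x‖ := by
        intro x
        have hx := hΦnorm x
        rw [hΦeq x, ht] at hx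
        rw [one_div, ← div_eq_inv_mul, le_div_iff₀ hpos]
        calc ‖f x‖ * t' = ‖f x * (t' : ℂ)‖ := by
              rw [norm_mul, Complex.norm_real, Real.norm_eq_abs, abs_of_nonneg ht'0]
          _ ≤ ‖x‖ := hx
      have hle := ContinuousLinearMap.opNorm_le_bound f (by positivity) hb
      rw [hfnorm, le_div_iff₀ hpos, one_mul] at hle
      exact hle
    · rw [← hzero]; exact zero_le_one
  have hu'le : u' ≤ 1 := by
    rcases hu'0.lt_or_eq with hpos | hzero
    · have hb : ∀ y : B, ‖g y‖ ≤ (1 / u') * ‖y‖ := by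
        intro y
        have hy := hΨnorm y
        rw [hΨeq y, hu] at hy
        rw [one_div, ← div_eq_inv_mul, le_div_iff₀ hpos]
        calc ‖g y‖ * u' = ‖g y * (u' : ℂ)‖ := by
              rw [norm_mul, Complex.norm_real, Real.norm_eq_abs, abs_of_nonneg hu'0]
          _ ≤ ‖y‖ := hy
      have hle := ContinuousLinearMap.opNorm_le_bound g (by positivity) hb
      rw [hgnorm, le_div_iff₀ hpos, one_mul] at hle
      exact hle
    · rw [← hzero]; exact zero_le_one
  have ht'1 : t' = 1 := le_antisymm ht'le (by nlinarith)
  have hfin := hΦ a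
  rwa [hΦeq a, ht, ht'1, Complex.ofReal_one, mul_one] at hfin

/-- If `(f_i)` and `(g_i)` are nets of states on C*-algebras `A` and `B`, `f, g` are states on
`A, B`, and `f_i(a)·g_i(b) → f(a)·g(b)` for all `a ∈ A`, `b ∈ B`, then `f_i(a) → f(a)` for all
`a` and `g_i(b) → g(b)` for all `b`. -/
theorem tendsto_states_of_tendsto_products {A B : Type*}
    [NormedRing A] [StarRing A] [CStarRing A] [NormedAlgebra ℂ A] [CompleteSpace A]
    [StarModule ℂ A]
    [NormedRing B] [StarRing B] [CStarRing B] [NormedAlgebra ℂ B] [CompleteSpace B]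
    [StarModule ℂ B]
    {ι : Type*} (l : Filter ι) [l.NeBot]
    (F : ι → (A →L[ℂ] ℂ)) (G : ι → (B →L[ℂ] ℂ)) (f : A →L[ℂ] ℂ) (g : B →L[ℂ] ℂ)
    (hFnorm : ∀ i, ‖F i‖ = 1)
    (hFpos : ∀ i, ∀ a : A, ∃ r : ℝ, 0 ≤ r ∧ F i (star a * a) = (r : ℂ))
    (hGnorm : ∀ i, ‖G i‖ = 1)
    (hGpos : ∀ i, ∀ b : B, ∃ r : ℝ, 0 ≤ r ∧ G i (star b * b) = (r : ℂ))
    (hfnorm : ‖f‖ = 1)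
    (hfpos : ∀ a : A, ∃ r : ℝ, 0 ≤ r ∧ f (star a * a) = (r : ℂ))
    (hgnorm : ‖g‖ = 1)
    (hgpos : ∀ b : B, ∃ r : ℝ, 0 ≤ r ∧ g (star b * b) = (r : ℂ))
    (h : ∀ (a : A) (b : B),
      Tendsto (fun i => F i a * G i b) l (𝓝 (f a * g b))) :
    (∀ a : A, Tendsto (fun i => F i a) l (𝓝 (f a))) ∧
    (∀ b : B, Tendsto (fun i => G i b) l (𝓝 (g b))) := by
  constructor
  · exact aux_tendsto l F G f g hFnorm hFpos hGnorm hGpos hfnorm hfpos hgnorm hgpos h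
  · exact aux_tendsto l G F g f hGnorm hGpos hFnorm hFpos hgnorm hgpos hfnorm hfpos
      (fun b a => by simpa [mul_comm] using h a b)
end
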